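/- Let E be a real Hilbert space with topological dual E*, let Λ₁ : E → E* be an invertible bounded linear map (a continuous linear equivalence), let Λ₂ : E → E* be bounded, and suppose there is a constant c ∈ ℝ with ‖Λ₁⁻¹ ∘ Λ₂ − c·id_E‖ < 1 + c. Then for every t ∈ [0,1] the operator Λ₁ + t²·Λ₂ : E → E* is invertible; in particular its kernel is trivial. -/

import Mathlib

/-!
With `A = Λ₁⁻¹ Λ₂` we have `Λ₁ + sΛ₂ = Λ₁ (1 + sA)`, and for `s = t² ∈ [0,1]`
`1 + sA = (1 + cs) (1 + (s / (1 + cs)) (A - c))`. Here `1 + cs > 0`, and the second factor is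
inverted by a Neumann series since `s ‖A - c‖ < s (1 + c) ≤ 1 + cs` (for `s > 0`).
-/

theorem isUnit_one_add_smul_of_norm_sub_smul_one_lt {R : Type*} [NormedRing R] [NormedAlgebra ℝ R]
    [HasSummableGeomSeries R] {a : R} {c s : ℝ} (h : ‖a - c • (1 : R)‖ < 1 + c) (hs₀ : 0 ≤ s)
    (hs₁ : s ≤ 1) : IsUnit (1 + s • a) := by
  have hpos : 0 < 1 + c * s := by
    rcases le_or_gt 0 c with hc | hc <;> nlinarith [norm_nonneg (a - c • (1 : R))]
  set r := s / (1 + c * s)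
  have hsmall : ‖-(r • (a - c • (1 : R)))‖ < 1 := by
    rw [norm_neg, norm_smul, Real.norm_of_nonneg (by positivity), div_mul_eq_mul_div,
      div_lt_one hpos]
    nlinarith [norm_nonneg (a - c • (1 : R))]
  have hfactor : 1 + s • a = (1 + c * s) • (1 - -(r • (a - c • (1 : R)))) := by
    rw [sub_neg_eq_add, smul_add, smul_smul, mul_div_cancel₀ _ hpos.ne']
    module
  rw [hfactor]
  exact (Units.oneSub _ hsmall).isUnit.smul (Units.mk0 _ hpos.ne')

theorem ContinuousLinearEquiv.exists_coe_eq_of_isUnit_symm_comp {𝕜 E F : Type*} [Semiring 𝕜]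
    [TopologicalSpace E] [AddCommMonoid E] [Module 𝕜 E] [TopologicalSpace F] [AddCommMonoid F]
    [Module 𝕜 F] (Λ : E ≃L[𝕜] F) {T : E →L[𝕜] F} (h : IsUnit ((Λ.symm : F →L[𝕜] E).comp T)) :
    ∃ e : E ≃L[𝕜] F, (e : E →L[𝕜] F) = T := by
  obtain ⟨u, hu⟩ := h
  refine ⟨(ContinuousLinearEquiv.unitsEquiv 𝕜 E u).trans Λ, ?_⟩
  ext x
  simp [hu]

/-- If `Λ₁ : E → E*` is an invertible bounded map, `Λ₂ : E → E*` is bounded, and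
`‖Λ₁⁻¹ ∘ Λ₂ − c·I‖ < 1 + c` for some `c ∈ ℝ`, then `Λ₁ + t²·Λ₂` is invertible for every
`t ∈ [0,1]`; in particular its kernel is trivial. -/
theorem stmt14 {E : Type*} [NormedAddCommGroup E] [InnerProductSpace ℝ E] [CompleteSpace E]
    (Λ₁ : E ≃L[ℝ] StrongDual ℝ E) (Λ₂ : E →L[ℝ] StrongDual ℝ E) (c : ℝ)
    (h : ‖(Λ₁.symm : StrongDual ℝ E →L[ℝ] E).comp Λ₂ - c • (1 : E →L[ℝ] E)‖ < 1 + c) :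
    ∀ t ∈ Set.Icc (0 : ℝ) 1,
      (∃ e : E ≃L[ℝ] StrongDual ℝ E,
        (e : E →L[ℝ] StrongDual ℝ E)
          = (Λ₁ : E →L[ℝ] StrongDual ℝ E) + t ^ 2 • Λ₂) ∧
      LinearMap.ker (((Λ₁ : E →L[ℝ] StrongDual ℝ E) + t ^ 2 • Λ₂ : E →L[ℝ] StrongDual ℝ E) : E →ₗ[ℝ] StrongDual ℝ E) = ⊥ := by
  intro t ht
  have hunit : IsUnit ((Λ₁.symm : StrongDual ℝ E →L[ℝ] E).comp
      ((Λ₁ : E →L[ℝ] StrongDual ℝ E) + t ^ 2 • Λ₂)) := by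
    rw [ContinuousLinearMap.comp_add, ContinuousLinearMap.comp_smul,
      ContinuousLinearEquiv.coe_symm_comp_coe]
    exact isUnit_one_add_smul_of_norm_sub_smul_one_lt h (sq_nonneg t) (pow_le_one₀ ht.1 ht.2)
  obtain ⟨e, he⟩ := Λ₁.exists_coe_eq_of_isUnit_symm_comp hunit
  exact ⟨⟨e, he⟩, he ▸ LinearMap.ker_eq_bot_of_injective e.injective⟩
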